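/- arXiv:2101.00917 — 5 statements merged into one kernel-verified Lean document; each statement's English description precedes it below -/
import Mathlib

section
/- Let K be a field of characteristic not 2 and not 3, let ζ ∈ K satisfy ζ² + ζ + 1 = 0, and let v ∈ K. Let M be the 2×2 matrix over K with rows ((2ζ+1)(v²−1), 3(v+1)²) and (3(v−1)², (2ζ+1)(v²−1)). Then M³ = 24(2ζ+1)(v²−1)³ · I, where I is the identity matrix; moreover M is not a scalar matrix, det M = −12(v²−1)², and hence if v² ≠ 1 then M is invertible and its image in PGL₂(K) has order exactly 3. -/
/-- The projective general linear group `PGL₂(K) = GL₂(K) / Z(GL₂(K))`. -/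
abbrev PGL2 (K : Type*) [Field K] :=
  Matrix.GeneralLinearGroup (Fin 2) K ⧸
    Subgroup.center (Matrix.GeneralLinearGroup (Fin 2) K)

/-- The matrix `M = [[(2ζ+1)(v²−1), 3(v+1)²], [3(v−1)², (2ζ+1)(v²−1)]]` (with
`ζ² + ζ + 1 = 0`, char `K ≠ 2, 3`) of the order-3 reduced automorphism `ρ` of the
Type-IV curve satisfies `M³ = 24(2ζ+1)(v²−1)³·I`, is not scalar, has determinant
`−12(v²−1)²`, and hence for `v² ≠ 1` it is invertible and its image in `PGL₂(K)`
has order exactly 3. -/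
theorem typeIV_rho_matrix_order_three {K : Type*} [Field K]
    (h2 : (2 : K) ≠ 0) (h3 : (3 : K) ≠ 0)
    (ζ : K) (hζ : ζ ^ 2 + ζ + 1 = 0) (v : K) :
    let M : Matrix (Fin 2) (Fin 2) K :=
      !![(2 * ζ + 1) * (v ^ 2 - 1), 3 * (v + 1) ^ 2;
         3 * (v - 1) ^ 2, (2 * ζ + 1) * (v ^ 2 - 1)]
    M ^ 3 = (24 * (2 * ζ + 1) * (v ^ 2 - 1) ^ 3) • (1 : Matrix (Fin 2) (Fin 2) K) ∧
    (∀ c : K, M ≠ c • (1 : Matrix (Fin 2) (Fin 2) K)) ∧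
    M.det = -12 * (v ^ 2 - 1) ^ 2 ∧
    (v ^ 2 ≠ 1 → IsUnit M ∧
      ∀ g : Matrix.GeneralLinearGroup (Fin 2) K,
        (g : Matrix (Fin 2) (Fin 2) K) = M →
          orderOf (QuotientGroup.mk g : PGL2 K) = 3) := by
  intro M
  have hcube : M ^ 3 = (24 * (2 * ζ + 1) * (v ^ 2 - 1) ^ 3) • (1 : Matrix (Fin 2) (Fin 2) K) := by
    rw [pow_succ, pow_succ, pow_one]
    ext i j
    fin_cases i <;> fin_cases j <;>
      simp [M, Matrix.mul_apply, Fin.sum_univ_succ, Matrix.one_apply]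
    · linear_combination (4 * (2 * ζ + 1) * (v ^ 2 - 1) ^ 3) * hζ
    · linear_combination (36 * (v + 1) ^ 2 * (v ^ 2 - 1) ^ 2) * hζ
    · linear_combination (36 * (v - 1) ^ 2 * (v ^ 2 - 1) ^ 2) * hζ
    · linear_combination (4 * (2 * ζ + 1) * (v ^ 2 - 1) ^ 3) * hζ
  have hns : ∀ c : K, M ≠ c • (1 : Matrix (Fin 2) (Fin 2) K) := by
    intro c hc
    have h01 := congrFun (congrFun hc 0) 1
    have h10 := congrFun (congrFun hc 1) 0
    simp [M, Matrix.one_apply] at h01 h10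
    have hv1 : v + 1 = 0 := h01.resolve_left h3
    have hv2 : v - 1 = 0 := h10.resolve_left h3
    apply h2
    linear_combination hv1 - hv2
  have hdet : M.det = -12 * (v ^ 2 - 1) ^ 2 := by
    simp [M, Matrix.det_fin_two_of]
    linear_combination 4 * (v^2-1)^2 * hζ
  refine ⟨hcube, hns, hdet, ?_⟩
  intro hv
  have hD : v ^ 2 - 1 ≠ 0 := sub_ne_zero.mpr hv
  have h12 : (12 : K) ≠ 0 := by
    have he : (12 : K) = 2 * 2 * 3 := by norm_num
    rw [he]
    exact mul_ne_zero (mul_ne_zero h2 h2) h3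
  have hdet0 : M.det ≠ 0 := by
    rw [hdet]
    exact mul_ne_zero (neg_ne_zero.mpr h12) (pow_ne_zero 2 hD)
  have hUnit : IsUnit M := (Matrix.isUnit_iff_isUnit_det M).mpr (isUnit_iff_ne_zero.mpr hdet0)
  refine ⟨hUnit, ?_⟩
  intro g hg
  haveI : Fact (Nat.Prime 3) := ⟨by norm_num⟩
  apply orderOf_eq_prime
  · -- (mk g)^3 = 1
    rw [← QuotientGroup.mk_pow, QuotientGroup.eq_one_iff]
    rw [Subgroup.mem_center_iff]
    intro z
    ext : 1
    push_cast
    have h3' : (g : Matrix (Fin 2) (Fin 2) K) ^ 3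
        = (24 * (2 * ζ + 1) * (v ^ 2 - 1) ^ 3) • (1 : Matrix (Fin 2) (Fin 2) K) := by
      rw [hg]; exact hcube
    rw [h3', Matrix.mul_smul, Matrix.smul_mul, mul_one, one_mul]
  · -- mk g ≠ 1
    intro h1
    have hgc : g ∈ Subgroup.center (Matrix.GeneralLinearGroup (Fin 2) K) :=
      (QuotientGroup.eq_one_iff g).mp h1
    have hN : (!![1, 1; 0, 1] : Matrix (Fin 2) (Fin 2) K) * !![1, -1; 0, 1] = 1 ∧
        (!![1, -1; 0, 1] : Matrix (Fin 2) (Fin 2) K) * !![1, 1; 0, 1] = 1 := by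
      constructor <;> · rw [Matrix.mul_fin_two, Matrix.one_fin_two] ; norm_num
    set N : Matrix.GeneralLinearGroup (Fin 2) K :=
      ⟨!![1, 1; 0, 1], !![1, -1; 0, 1], hN.1, hN.2⟩ with hNdef
    have hcomm := Subgroup.mem_center_iff.mp hgc N
    have hmat : (!![1, 1; 0, 1] : Matrix (Fin 2) (Fin 2) K) * M
        = M * !![1, 1; 0, 1] := by
      have := congrArg (Units.val) hcomm
      push_cast at this
      rw [hg] at this
      exact this
    have h00 := congrFun (congrFun hmat 0) 0
    simp [M, Matrix.mul_apply, Fin.sum_univ_succ] at h00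
    have hv1 : v - 1 = 0 := h00.resolve_left h3
    exact hv (by linear_combination (v + 1) * hv1)
end

section
/- Let K be a field of characteristic not 2 and not 3, let ζ ∈ K satisfy ζ² + ζ + 1 = 0 with ζ ≠ 1, and let v ∈ K be such that v(v²−1)(v+ζ)(v+ζ²)(v−ζ)(v−ζ²) ≠ 0. Set s := (v+1)(v−ζ)/((v−1)(v+ζ)) and t := (v+1)(v−ζ²)/((v−1)(v+ζ²)), and assume the six elements 1, −1, s, −s, t, −t of K are pairwise distinct. Define μ : K ∪ {∞} → K ∪ {∞} to be the Möbius transformation μ(x) = ((2ζ+1)(v²−1)x + 3(v+1)²) / (3(v−1)²x + (2ζ+1)(v²−1)). Then μ maps the set {1, −1, s, −s, t, −t} bijectively to itself; in particular μ(1) = s. -/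
/-- Over a field `K` of characteristic `≠ 2, 3` with `ζ` a primitive third root of
unity, `v` generic, `s = (v+1)(v−ζ)/((v−1)(v+ζ))` and `t = (v+1)(v−ζ²)/((v−1)(v+ζ²))`
with `1, −1, s, −s, t, −t` pairwise distinct, the Möbius transformation
`μ(x) = ((2ζ+1)(v²−1)x + 3(v+1)²) / (3(v−1)²x + (2ζ+1)(v²−1))` maps the set
`{1, −1, s, −s, t, −t}` bijectively to itself (in particular never to `∞`, i.e. the
denominator is nonvanishing on the set), and `μ(1) = s`. -/
theorem typeIV_rho_permutes_weierstrass_points {K : Type*} [Field K]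
    (h2 : (2 : K) ≠ 0) (h3 : (3 : K) ≠ 0)
    (ζ : K) (hζ : ζ ^ 2 + ζ + 1 = 0) (hζ1 : ζ ≠ 1)
    (v : K)
    (hv : v * (v ^ 2 - 1) * (v + ζ) * (v + ζ ^ 2) * (v - ζ) * (v - ζ ^ 2) ≠ 0)
    (s t : K)
    (hs : s = (v + 1) * (v - ζ) / ((v - 1) * (v + ζ)))
    (ht : t = (v + 1) * (v - ζ ^ 2) / ((v - 1) * (v + ζ ^ 2)))
    (hdistinct : ([1, -1, s, -s, t, -t] : List K).Pairwise (· ≠ ·)) :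
    (∀ x ∈ ({1, -1, s, -s, t, -t} : Set K),
      3 * (v - 1) ^ 2 * x + (2 * ζ + 1) * (v ^ 2 - 1) ≠ 0) ∧
    Set.BijOn
      (fun x => ((2 * ζ + 1) * (v ^ 2 - 1) * x + 3 * (v + 1) ^ 2) /
        (3 * (v - 1) ^ 2 * x + (2 * ζ + 1) * (v ^ 2 - 1)))
      ({1, -1, s, -s, t, -t} : Set K) ({1, -1, s, -s, t, -t} : Set K) ∧
    ((2 * ζ + 1) * (v ^ 2 - 1) * 1 + 3 * (v + 1) ^ 2) /
        (3 * (v - 1) ^ 2 * 1 + (2 * ζ + 1) * (v ^ 2 - 1)) = s := by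
  -- basic nonvanishing facts
  have hvfac : v * ((v - 1) * (v + 1)) * (v + ζ) * (v + ζ ^ 2) * (v - ζ) * (v - ζ ^ 2) ≠ 0 := by
    intro h; exact hv (by linear_combination h)
  have h1 : v - 1 ≠ 0 := by intro h; exact hvfac (by rw [h]; ring)
  have h1' : v + 1 ≠ 0 := by intro h; exact hvfac (by rw [h]; ring)
  have hvz : v + ζ ≠ 0 := by intro h; exact hvfac (by rw [h]; ring)
  have hvz2 : v + ζ ^ 2 ≠ 0 := by intro h; exact hvfac (by rw [h]; ring)
  have hzm1 : ζ - 1 ≠ 0 := sub_ne_zero.mpr hζ1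
  have hz2 : ζ + 2 ≠ 0 := by
    intro h; exact h3 (by linear_combination hζ - (ζ - 1) * h)
  have hsD : (v - 1) * (v + ζ) ≠ 0 := mul_ne_zero h1 hvz
  have htD : (v - 1) * (v + ζ ^ 2) ≠ 0 := mul_ne_zero h1 hvz2
  have hv21 : v ^ 2 - 1 ≠ 0 := by
    intro h; exact (mul_ne_zero h1 h1') (by linear_combination h)
  have hs' : s * ((v - 1) * (v + ζ)) = (v + 1) * (v - ζ) := by
    rw [hs, div_mul_cancel₀ _ hsD]
  have ht' : t * ((v - 1) * (v + ζ ^ 2)) = (v + 1) * (v - ζ ^ 2) := by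
    rw [ht, div_mul_cancel₀ _ htD]
  -- denominator identities
  have d1 : 3 * (v - 1) ^ 2 * 1 + (2 * ζ + 1) * (v ^ 2 - 1)
      = 2 * ((ζ + 2) * ((v - 1) * (v + ζ))) := by
    linear_combination (2 - 2*v) * hζ
  have d2 : 3 * (v - 1) ^ 2 * (-1) + (2 * ζ + 1) * (v ^ 2 - 1)
      = 2 * ((ζ - 1) * ((v - 1) * (v + ζ ^ 2))) := by
    linear_combination (-4 + 2*ζ + 4*v - 2*v*ζ) * hζ
  have d3 : (3 * (v - 1) ^ 2 * s + (2 * ζ + 1) * (v ^ 2 - 1)) * ((v - 1) * (v + ζ))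
      = 2 * ((ζ + 2) * ((v - 1) ^ 2 * ((v + 1) * (v + ζ ^ 2)))) := by
    linear_combination (3 - 6*v + 3*v^2) * hs' + (-2*ζ + 2*v*ζ + 2*v^2*ζ - 2*v^3*ζ) * hζ
  have d4 : (3 * (v - 1) ^ 2 * (-s) + (2 * ζ + 1) * (v ^ 2 - 1)) * ((v - 1) * (v + ζ))
      = 2 * ((ζ - 1) * (v ^ 2 - 1) ^ 2) := by
    linear_combination (-3 + 6*v - 3*v^2) * hs' + (2 - 2*v - 2*v^2 + 2*v^3) * hζ
  have d5 : (3 * (v - 1) ^ 2 * t + (2 * ζ + 1) * (v ^ 2 - 1)) * ((v - 1) * (v + ζ ^ 2))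
      = 2 * ((ζ + 2) * (v ^ 2 - 1) ^ 2) := by
    linear_combination (3 - 6*v + 3*v^2) * ht'
      + (-4 + 2*ζ + 4*v - 2*v*ζ + 4*v^2 - 2*v^2*ζ - 4*v^3 + 2*v^3*ζ) * hζ
  have d6 : (3 * (v - 1) ^ 2 * (-t) + (2 * ζ + 1) * (v ^ 2 - 1)) * ((v - 1) * (v + ζ ^ 2))
      = 2 * ((ζ - 1) * ((v - 1) ^ 2 * ((v + 1) * (v + ζ)))) := by
    linear_combination (-3 + 6*v - 3*v^2) * ht' + (2*ζ - 2*v*ζ - 2*v^2*ζ + 2*v^3*ζ) * hζ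
  -- nonvanishing of denominators on the six points
  have hD1 : 3 * (v - 1) ^ 2 * 1 + (2 * ζ + 1) * (v ^ 2 - 1) ≠ 0 := by
    rw [d1]; exact mul_ne_zero h2 (mul_ne_zero hz2 hsD)
  have hD2 : 3 * (v - 1) ^ 2 * (-1) + (2 * ζ + 1) * (v ^ 2 - 1) ≠ 0 := by
    rw [d2]; exact mul_ne_zero h2 (mul_ne_zero hzm1 htD)
  have hDs : 3 * (v - 1) ^ 2 * s + (2 * ζ + 1) * (v ^ 2 - 1) ≠ 0 := by
    intro h; rw [h, zero_mul] at d3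
    exact (mul_ne_zero h2 (mul_ne_zero hz2 (mul_ne_zero (pow_ne_zero 2 h1)
      (mul_ne_zero h1' hvz2)))) d3.symm
  have hDns : 3 * (v - 1) ^ 2 * (-s) + (2 * ζ + 1) * (v ^ 2 - 1) ≠ 0 := by
    intro h; rw [h, zero_mul] at d4
    exact (mul_ne_zero h2 (mul_ne_zero hzm1 (pow_ne_zero 2 hv21))) d4.symm
  have hDt : 3 * (v - 1) ^ 2 * t + (2 * ζ + 1) * (v ^ 2 - 1) ≠ 0 := by
    intro h; rw [h, zero_mul] at d5
    exact (mul_ne_zero h2 (mul_ne_zero hz2 (pow_ne_zero 2 hv21))) d5.symm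
  have hDnt : 3 * (v - 1) ^ 2 * (-t) + (2 * ζ + 1) * (v ^ 2 - 1) ≠ 0 := by
    intro h; rw [h, zero_mul] at d6
    exact (mul_ne_zero h2 (mul_ne_zero hzm1 (mul_ne_zero (pow_ne_zero 2 h1)
      (mul_ne_zero h1' hvz)))) d6.symm
  -- image identities (multiplied through by denominators)
  have i1 : ((2 * ζ + 1) * (v ^ 2 - 1) * 1 + 3 * (v + 1) ^ 2) * ((v - 1) * (v + ζ))
      = (s * (3 * (v - 1) ^ 2 * 1 + (2 * ζ + 1) * (v ^ 2 - 1))) * ((v - 1) * (v + ζ)) := by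
    linear_combination (-2 + 2*ζ + 6*v - 4*v^2 - 2*v^2*ζ) * hs' + (-4*v + 4*v^3) * hζ
  have i2 : ((2 * ζ + 1) * (v ^ 2 - 1) * (-1) + 3 * (v + 1) ^ 2) * ((v - 1) * (v + ζ ^ 2))
      = ((-t) * (3 * (v - 1) ^ 2 * (-1) + (2 * ζ + 1) * (v ^ 2 - 1))) * ((v - 1) * (v + ζ ^ 2)) := by
    linear_combination (-4 - 2*ζ + 6*v - 2*v^2 + 2*v^2*ζ) * ht'
      + (-8*v + 4*v*ζ + 8*v^3 - 4*v^3*ζ) * hζ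
  have i3 : (((2 * ζ + 1) * (v ^ 2 - 1) * s + 3 * (v + 1) ^ 2) * ((v - 1) * (v + ζ)))
        * ((v - 1) * (v + ζ ^ 2))
      = ((t * (3 * (v - 1) ^ 2 * s + (2 * ζ + 1) * (v ^ 2 - 1))) * ((v - 1) * (v + ζ)))
        * ((v - 1) * (v + ζ ^ 2)) := by
    linear_combination
      (ζ^2 + 2*ζ^3 + v + 2*v*ζ - v*ζ^2 - 2*v*ζ^3 - v^2 - 2*v^2*ζ - v^2*ζ^2 - 2*v^2*ζ^3
        - v^3 - 2*v^3*ζ + v^3*ζ^2 + 2*v^3*ζ^3 + v^4 + 2*v^4*ζ + 3*t*ζ^2 + 3*t*v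
        - 9*t*v*ζ^2 - 9*t*v^2 + 9*t*v^2*ζ^2 + 9*t*v^3 - 3*t*v^3*ζ^2 - 3*t*v^4) * hs'
      + (2*ζ - 2*ζ^2 - 4*v - 4*v*ζ + 2*v*ζ^2 + 4*v^2 + 2*v^2*ζ^2 + 4*v^3 + 4*v^3*ζ
        - 2*v^3*ζ^2 - 4*v^4 - 2*v^4*ζ) * ht'
      + (4*v*ζ - 8*v^3*ζ + 4*v^5*ζ) * hζ
  have i4 : ((2 * ζ + 1) * (v ^ 2 - 1) * (-s) + 3 * (v + 1) ^ 2) * ((v - 1) * (v + ζ))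
      = ((-1 : K) * (3 * (v - 1) ^ 2 * (-s) + (2 * ζ + 1) * (v ^ 2 - 1))) * ((v - 1) * (v + ζ)) := by
    linear_combination (-2 + 2*ζ + 6*v - 4*v^2 - 2*v^2*ζ) * hs' + (-4*v + 4*v^3) * hζ
  have i5 : ((2 * ζ + 1) * (v ^ 2 - 1) * t + 3 * (v + 1) ^ 2) * ((v - 1) * (v + ζ ^ 2))
      = ((1 : K) * (3 * (v - 1) ^ 2 * t + (2 * ζ + 1) * (v ^ 2 - 1))) * ((v - 1) * (v + ζ ^ 2)) := by
    linear_combination (-4 - 2*ζ + 6*v - 2*v^2 + 2*v^2*ζ) * ht'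
      + (-8*v + 4*v*ζ + 8*v^3 - 4*v^3*ζ) * hζ
  have i6 : (((2 * ζ + 1) * (v ^ 2 - 1) * (-t) + 3 * (v + 1) ^ 2) * ((v - 1) * (v + ζ ^ 2)))
        * ((v - 1) * (v + ζ))
      = (((-s) * (3 * (v - 1) ^ 2 * (-t) + (2 * ζ + 1) * (v ^ 2 - 1))) * ((v - 1) * (v + ζ ^ 2)))
        * ((v - 1) * (v + ζ)) := by
    linear_combination
      (ζ^2 + 2*ζ^3 + v + 2*v*ζ - v*ζ^2 - 2*v*ζ^3 - v^2 - 2*v^2*ζ - v^2*ζ^2 - 2*v^2*ζ^3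
        - v^3 - 2*v^3*ζ + v^3*ζ^2 + 2*v^3*ζ^3 + v^4 + 2*v^4*ζ + 3*t*ζ^2 + 3*t*v
        - 9*t*v*ζ^2 - 9*t*v^2 + 9*t*v^2*ζ^2 + 9*t*v^3 - 3*t*v^3*ζ^2 - 3*t*v^4) * hs'
      + (2*ζ - 2*ζ^2 - 4*v - 4*v*ζ + 2*v*ζ^2 + 4*v^2 + 2*v^2*ζ^2 + 4*v^3 + 4*v^3*ζ
        - 2*v^3*ζ^2 - 4*v^4 - 2*v^4*ζ) * ht'
      + (4*v*ζ - 8*v^3*ζ + 4*v^5*ζ) * hζ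
  -- the six values of the Möbius transformation
  have m1 : ((2 * ζ + 1) * (v ^ 2 - 1) * 1 + 3 * (v + 1) ^ 2) /
      (3 * (v - 1) ^ 2 * 1 + (2 * ζ + 1) * (v ^ 2 - 1)) = s := by
    rw [div_eq_iff hD1]; exact mul_right_cancel₀ hsD i1
  have m2 : ((2 * ζ + 1) * (v ^ 2 - 1) * (-1) + 3 * (v + 1) ^ 2) /
      (3 * (v - 1) ^ 2 * (-1) + (2 * ζ + 1) * (v ^ 2 - 1)) = -t := by
    rw [div_eq_iff hD2]; exact mul_right_cancel₀ htD i2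
  have m3 : ((2 * ζ + 1) * (v ^ 2 - 1) * s + 3 * (v + 1) ^ 2) /
      (3 * (v - 1) ^ 2 * s + (2 * ζ + 1) * (v ^ 2 - 1)) = t := by
    rw [div_eq_iff hDs]
    exact mul_right_cancel₀ hsD (mul_right_cancel₀ htD i3)
  have m4 : ((2 * ζ + 1) * (v ^ 2 - 1) * (-s) + 3 * (v + 1) ^ 2) /
      (3 * (v - 1) ^ 2 * (-s) + (2 * ζ + 1) * (v ^ 2 - 1)) = -1 := by
    rw [div_eq_iff hDns]
    exact mul_right_cancel₀ hsD i4
  have m5 : ((2 * ζ + 1) * (v ^ 2 - 1) * t + 3 * (v + 1) ^ 2) /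
      (3 * (v - 1) ^ 2 * t + (2 * ζ + 1) * (v ^ 2 - 1)) = 1 := by
    rw [div_eq_iff hDt]
    exact mul_right_cancel₀ htD i5
  have m6 : ((2 * ζ + 1) * (v ^ 2 - 1) * (-t) + 3 * (v + 1) ^ 2) /
      (3 * (v - 1) ^ 2 * (-t) + (2 * ζ + 1) * (v ^ 2 - 1)) = -s := by
    rw [div_eq_iff hDnt]
    exact mul_right_cancel₀ htD (mul_right_cancel₀ hsD i6)
  have mem_1 : (1 : K) ∈ ({1, -1, s, -s, t, -t} : Set K) := Set.mem_insert _ _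
  have mem_n1 : (-1 : K) ∈ ({1, -1, s, -s, t, -t} : Set K) :=
    Set.mem_insert_iff.mpr (Or.inr (Set.mem_insert _ _))
  have mem_s : s ∈ ({1, -1, s, -s, t, -t} : Set K) :=
    Set.mem_insert_iff.mpr (Or.inr (Set.mem_insert_iff.mpr (Or.inr (Set.mem_insert _ _))))
  have mem_ns : -s ∈ ({1, -1, s, -s, t, -t} : Set K) :=
    Set.mem_insert_iff.mpr (Or.inr (Set.mem_insert_iff.mpr (Or.inr
      (Set.mem_insert_iff.mpr (Or.inr (Set.mem_insert _ _))))))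
  have mem_t : t ∈ ({1, -1, s, -s, t, -t} : Set K) :=
    Set.mem_insert_iff.mpr (Or.inr (Set.mem_insert_iff.mpr (Or.inr
      (Set.mem_insert_iff.mpr (Or.inr (Set.mem_insert_iff.mpr (Or.inr (Set.mem_insert _ _))))))))
  have mem_nt : -t ∈ ({1, -1, s, -s, t, -t} : Set K) :=
    Set.mem_insert_iff.mpr (Or.inr (Set.mem_insert_iff.mpr (Or.inr
      (Set.mem_insert_iff.mpr (Or.inr (Set.mem_insert_iff.mpr (Or.inr
        (Set.mem_insert_iff.mpr (Or.inr rfl)))))))))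
  refine ⟨?_, ?_, m1⟩
  · intro x hx
    simp only [Set.mem_insert_iff, Set.mem_singleton_iff] at hx
    rcases hx with rfl | rfl | rfl | rfl | rfl | rfl
    exacts [hD1, hD2, hDs, hDns, hDt, hDnt]
  · apply Set.InvOn.bijOn
      (f' := fun y => ((2 * ζ + 1) * (v ^ 2 - 1) *
          (((2 * ζ + 1) * (v ^ 2 - 1) * y + 3 * (v + 1) ^ 2) /
            (3 * (v - 1) ^ 2 * y + (2 * ζ + 1) * (v ^ 2 - 1))) + 3 * (v + 1) ^ 2) /
        (3 * (v - 1) ^ 2 *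
          (((2 * ζ + 1) * (v ^ 2 - 1) * y + 3 * (v + 1) ^ 2) /
            (3 * (v - 1) ^ 2 * y + (2 * ζ + 1) * (v ^ 2 - 1))) + (2 * ζ + 1) * (v ^ 2 - 1)))
    · constructor
      · intro x hx
        simp only [Set.mem_insert_iff, Set.mem_singleton_iff] at hx
        rcases hx with rfl | rfl | rfl | rfl | rfl | rfl <;>
          simp only [m1, m2, m3, m4, m5, m6]
      · intro x hx
        simp only [Set.mem_insert_iff, Set.mem_singleton_iff] at hx
        rcases hx with rfl | rfl | rfl | rfl | rfl | rfl <;>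
          simp only [m1, m2, m3, m4, m5, m6]
    · intro x hx
      simp only [Set.mem_insert_iff, Set.mem_singleton_iff] at hx
      rcases hx with rfl | rfl | rfl | rfl | rfl | rfl
      · exact Set.mem_of_eq_of_mem m1 mem_s
      · exact Set.mem_of_eq_of_mem m2 mem_nt
      · exact Set.mem_of_eq_of_mem m3 mem_t
      · exact Set.mem_of_eq_of_mem m4 mem_n1
      · exact Set.mem_of_eq_of_mem m5 mem_1
      · exact Set.mem_of_eq_of_mem m6 mem_ns
    · intro x hx
      simp only [Set.mem_insert_iff, Set.mem_singleton_iff] at hx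
      rcases hx with rfl | rfl | rfl | rfl | rfl | rfl
      · simp only [m1, m3]; exact mem_t
      · simp only [m2, m6]; exact mem_ns
      · simp only [m3, m5]; exact mem_1
      · simp only [m4, m2]; exact mem_nt
      · simp only [m5, m1]; exact mem_s
      · simp only [m6, m4]; exact mem_n1
end

section
/- In the symmetric group on {1,…,15}, let σ := (8 9)(10 11)(12 13)(14 15), ρ := (1 9 8)(2 15 14)(4 12 13)(6 10 11), and ω := (1 4)(2 14 7 15)(3 10 6 11)(8 9 13 12) (unlisted points are fixed). Then ω has order exactly 4, and the subgroup ⟨σ, ρ, ω⟩ has order 24 and is isomorphic to the symmetric group S₄. -/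
open Equiv

namespace TypeVIAux

/-- table of unordered pairs: {0,1}↦1, {1,2}↦8, {1,3}↦9, {2,3}↦4, {0,2}↦12, {0,3}↦13 -/
def p2 : Fin 4 → Fin 4 → Fin 16 :=
  ![![0, 1, 12, 13], ![1, 0, 8, 9], ![12, 8, 0, 4], ![13, 9, 4, 0]]

def o1 : Fin 4 → Fin 16 := ![2, 7, 14, 15]
def o2 : Fin 4 → Fin 16 := ![6, 3, 11, 10]

def act (g : Perm (Fin 4)) : Fin 16 → Fin 16 :=
  ![0, p2 (g 0) (g 1), o1 (g 0), o2 (g 1), p2 (g 2) (g 3), 5, o2 (g 0), o1 (g 1),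
    p2 (g 1) (g 2), p2 (g 1) (g 3), o2 (g 3), o2 (g 2), p2 (g 0) (g 2), p2 (g 0) (g 3),
    o1 (g 2), o1 (g 3)]

set_option maxHeartbeats 8000000 in
lemma act_inv : ∀ (g : Perm (Fin 4)) (k : Fin 16), act g⁻¹ (act g k) = k := by decide

set_option maxHeartbeats 8000000 in
lemma act_o1 : ∀ (g : Perm (Fin 4)) (j : Fin 4), act g (o1 j) = o1 (g j) := by decide

set_option maxHeartbeats 8000000 in
lemma act_o2 : ∀ (g : Perm (Fin 4)) (j : Fin 4), act g (o2 j) = o2 (g j) := by decide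

set_option maxHeartbeats 8000000 in
lemma act_p2 : ∀ (g : Perm (Fin 4)) (a b : Fin 4), a ≠ b →
    act g (p2 a b) = p2 (g a) (g b) := by decide

lemma o1_inj : ∀ a b : Fin 4, o1 a = o1 b → a = b := by decide

set_option maxHeartbeats 1000000 in
lemma act_e0 : ∀ g : Perm (Fin 4), act g 0 = 0 := by decide
set_option maxHeartbeats 1000000 in
lemma act_e1 : ∀ g : Perm (Fin 4), act g 1 = p2 (g 0) (g 1) := by decide
set_option maxHeartbeats 1000000 in
lemma act_e2 : ∀ g : Perm (Fin 4), act g 2 = o1 (g 0) := by decide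
set_option maxHeartbeats 1000000 in
lemma act_e3 : ∀ g : Perm (Fin 4), act g 3 = o2 (g 1) := by decide
set_option maxHeartbeats 1000000 in
lemma act_e4 : ∀ g : Perm (Fin 4), act g 4 = p2 (g 2) (g 3) := by decide
set_option maxHeartbeats 1000000 in
lemma act_e5 : ∀ g : Perm (Fin 4), act g 5 = 5 := by decide
set_option maxHeartbeats 1000000 in
lemma act_e6 : ∀ g : Perm (Fin 4), act g 6 = o2 (g 0) := by decide
set_option maxHeartbeats 1000000 in
lemma act_e7 : ∀ g : Perm (Fin 4), act g 7 = o1 (g 1) := by decide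
set_option maxHeartbeats 1000000 in
lemma act_e8 : ∀ g : Perm (Fin 4), act g 8 = p2 (g 1) (g 2) := by decide
set_option maxHeartbeats 1000000 in
lemma act_e9 : ∀ g : Perm (Fin 4), act g 9 = p2 (g 1) (g 3) := by decide
set_option maxHeartbeats 1000000 in
lemma act_e10 : ∀ g : Perm (Fin 4), act g 10 = o2 (g 3) := by decide
set_option maxHeartbeats 1000000 in
lemma act_e11 : ∀ g : Perm (Fin 4), act g 11 = o2 (g 2) := by decide
set_option maxHeartbeats 1000000 in
lemma act_e12 : ∀ g : Perm (Fin 4), act g 12 = p2 (g 0) (g 2) := by decide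
set_option maxHeartbeats 1000000 in
lemma act_e13 : ∀ g : Perm (Fin 4), act g 13 = p2 (g 0) (g 3) := by decide
set_option maxHeartbeats 1000000 in
lemma act_e14 : ∀ g : Perm (Fin 4), act g 14 = o1 (g 2) := by decide
set_option maxHeartbeats 1000000 in
lemma act_e15 : ∀ g : Perm (Fin 4), act g 15 = o1 (g 3) := by decide

lemma act_mul (g h : Perm (Fin 4)) (k : Fin 16) : act (g * h) k = act g (act h k) := by
  fin_cases k
  · show act (g * h) (0 : Fin 16) = act g (act h 0)
    rw [act_e0, act_e0, act_e0]
  · show act (g * h) (1 : Fin 16) = act g (act h 1)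
    rw [act_e1, act_e1, act_p2 g (h 0) (h 1) (h.injective.ne (show (0:Fin 4) ≠ 1 by decide)),
      Equiv.Perm.mul_apply, Equiv.Perm.mul_apply]
  · show act (g * h) (2 : Fin 16) = act g (act h 2)
    rw [act_e2, act_e2, act_o1 g (h 0), Equiv.Perm.mul_apply]
  · show act (g * h) (3 : Fin 16) = act g (act h 3)
    rw [act_e3, act_e3, act_o2 g (h 1), Equiv.Perm.mul_apply]
  · show act (g * h) (4 : Fin 16) = act g (act h 4)
    rw [act_e4, act_e4, act_p2 g (h 2) (h 3) (h.injective.ne (show (2:Fin 4) ≠ 3 by decide)),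
      Equiv.Perm.mul_apply, Equiv.Perm.mul_apply]
  · show act (g * h) (5 : Fin 16) = act g (act h 5)
    rw [act_e5, act_e5, act_e5]
  · show act (g * h) (6 : Fin 16) = act g (act h 6)
    rw [act_e6, act_e6, act_o2 g (h 0), Equiv.Perm.mul_apply]
  · show act (g * h) (7 : Fin 16) = act g (act h 7)
    rw [act_e7, act_e7, act_o1 g (h 1), Equiv.Perm.mul_apply]
  · show act (g * h) (8 : Fin 16) = act g (act h 8)
    rw [act_e8, act_e8, act_p2 g (h 1) (h 2) (h.injective.ne (show (1:Fin 4) ≠ 2 by decide)),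
      Equiv.Perm.mul_apply, Equiv.Perm.mul_apply]
  · show act (g * h) (9 : Fin 16) = act g (act h 9)
    rw [act_e9, act_e9, act_p2 g (h 1) (h 3) (h.injective.ne (show (1:Fin 4) ≠ 3 by decide)),
      Equiv.Perm.mul_apply, Equiv.Perm.mul_apply]
  · show act (g * h) (10 : Fin 16) = act g (act h 10)
    rw [act_e10, act_e10, act_o2 g (h 3), Equiv.Perm.mul_apply]
  · show act (g * h) (11 : Fin 16) = act g (act h 11)
    rw [act_e11, act_e11, act_o2 g (h 2), Equiv.Perm.mul_apply]
  · show act (g * h) (12 : Fin 16) = act g (act h 12)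
    rw [act_e12, act_e12, act_p2 g (h 0) (h 2) (h.injective.ne (show (0:Fin 4) ≠ 2 by decide)),
      Equiv.Perm.mul_apply, Equiv.Perm.mul_apply]
  · show act (g * h) (13 : Fin 16) = act g (act h 13)
    rw [act_e13, act_e13, act_p2 g (h 0) (h 3) (h.injective.ne (show (0:Fin 4) ≠ 3 by decide)),
      Equiv.Perm.mul_apply, Equiv.Perm.mul_apply]
  · show act (g * h) (14 : Fin 16) = act g (act h 14)
    rw [act_e14, act_e14, act_o1 g (h 2), Equiv.Perm.mul_apply]
  · show act (g * h) (15 : Fin 16) = act g (act h 15)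
    rw [act_e15, act_e15, act_o1 g (h 3), Equiv.Perm.mul_apply]

/-- The permutation representation of `S₄` on 16 points. -/
def f : Perm (Fin 4) →* Perm (Fin 16) :=
  MonoidHom.mk' (fun g => ⟨act g, act g⁻¹, fun k => act_inv g k,
      fun k => by have := act_inv g⁻¹ k; rwa [inv_inv] at this⟩)
    (fun a b => Equiv.ext fun k => act_mul a b k)

lemma f_injective : Function.Injective f := by
  intro g h e
  refine Equiv.ext fun j => ?_
  have hj : act g (o1 j) = act h (o1 j) :=
    congrFun (congrArg (fun (p : Perm (Fin 16)) => p.toFun) e) (o1 j)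
  rw [act_o1, act_o1] at hj
  exact o1_inj _ _ hj

def s : Perm (Fin 4) := Equiv.swap 2 3
def r : Perm (Fin 4) := Equiv.swap 0 3 * Equiv.swap 3 2
def w : Perm (Fin 4) := Equiv.swap 0 2 * Equiv.swap 2 1 * Equiv.swap 1 3

lemma closure_srw : Subgroup.closure ({s, r, w} : Set (Perm (Fin 4))) = ⊤ := by
  rw [eq_top_iff, ← Equiv.Perm.closure_isSwap, Subgroup.closure_le]
  rintro σ ⟨a, b, hab, rfl⟩
  have hs : s ∈ Subgroup.closure ({s, r, w} : Set (Perm (Fin 4))) :=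
    Subgroup.subset_closure (by simp)
  have hr : r ∈ Subgroup.closure ({s, r, w} : Set (Perm (Fin 4))) :=
    Subgroup.subset_closure (by simp)
  have hw : w ∈ Subgroup.closure ({s, r, w} : Set (Perm (Fin 4))) :=
    Subgroup.subset_closure (by simp)
  have h01 : Equiv.swap (0 : Fin 4) 1 = s * w * w := by decide
  have h02 : Equiv.swap (0 : Fin 4) 2 = s * r := by decide
  have h03 : Equiv.swap (0 : Fin 4) 3 = r * s := by decide
  have h12 : Equiv.swap (1 : Fin 4) 2 = r * w := by decide
  have h13 : Equiv.swap (1 : Fin 4) 3 = w * r := by decide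
  have h23 : Equiv.swap (2 : Fin 4) 3 = s := by decide
  fin_cases a <;> fin_cases b <;> simp_all <;>
    first
      | (rw [Equiv.swap_comm]; simp_all)
      | skip
  all_goals
    first
      | exact mul_mem (mul_mem hs hw) hw
      | exact mul_mem hs hr
      | exact mul_mem hr hs
      | exact mul_mem hr hw
      | exact mul_mem hw hr
      | exact hs

lemma viaEmbedding_swap {α β : Type*} [DecidableEq α] [DecidableEq β] (ι : α ↪ β) (a b : α) :
    (Equiv.swap a b).viaEmbedding ι = Equiv.swap (ι a) (ι b) := by
  ext x
  by_cases hx : x ∈ Set.range ι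
  · obtain ⟨y, rfl⟩ := hx
    rw [Equiv.Perm.viaEmbedding_apply, ι.injective.swap_apply]
  · rw [Equiv.Perm.viaEmbedding_apply_of_notMem _ _ x hx,
      Equiv.swap_apply_of_ne_of_ne (fun h => hx ⟨a, h.symm⟩) (fun h => hx ⟨b, h.symm⟩)]

noncomputable def φ : Perm (Fin 4) →* Perm ℕ :=
  (Equiv.Perm.viaEmbeddingHom (Fin.valEmbedding : Fin 16 ↪ ℕ)).comp f

lemma φ_injective : Function.Injective φ :=
  (Equiv.Perm.viaEmbeddingHom_injective _).comp f_injective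

end TypeVIAux

/-- In the symmetric group on `{1,…,15}` (realized inside `Equiv.Perm ℕ`, all other
points being fixed), with `σ = (8 9)(10 11)(12 13)(14 15)`,
`ρ = (1 9 8)(2 15 14)(4 12 13)(6 10 11)` and
`ω = (1 4)(2 14 7 15)(3 10 6 11)(8 9 13 12)`: `ω` has order exactly 4, and the
subgroup `⟨σ, ρ, ω⟩` has order 24 and is isomorphic to the symmetric group `S₄`. -/
theorem typeVI_reduced_automorphism_group :
    let σ : Equiv.Perm ℕ :=
      Equiv.swap 8 9 * Equiv.swap 10 11 * Equiv.swap 12 13 * Equiv.swap 14 15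
    let ρ : Equiv.Perm ℕ :=
      (Equiv.swap 1 9 * Equiv.swap 9 8) * (Equiv.swap 2 15 * Equiv.swap 15 14) *
      (Equiv.swap 4 12 * Equiv.swap 12 13) * (Equiv.swap 6 10 * Equiv.swap 10 11)
    let ω : Equiv.Perm ℕ :=
      Equiv.swap 1 4 * (Equiv.swap 2 14 * Equiv.swap 14 7 * Equiv.swap 7 15) *
      (Equiv.swap 3 10 * Equiv.swap 10 6 * Equiv.swap 6 11) *
      (Equiv.swap 8 9 * Equiv.swap 9 13 * Equiv.swap 13 12)
    orderOf ω = 4 ∧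
    Nat.card ↥(Subgroup.closure ({σ, ρ, ω} : Set (Equiv.Perm ℕ))) = 24 ∧
    Nonempty (↥(Subgroup.closure ({σ, ρ, ω} : Set (Equiv.Perm ℕ))) ≃*
      Equiv.Perm (Fin 4)) := by
  intro σ ρ ω
  have hfs : TypeVIAux.f TypeVIAux.s =
      Equiv.swap (8 : Fin 16) 9 * Equiv.swap 10 11 * Equiv.swap 12 13 * Equiv.swap 14 15 := by
    decide
  have hfr : TypeVIAux.f TypeVIAux.r =
      (Equiv.swap (1 : Fin 16) 9 * Equiv.swap 9 8) * (Equiv.swap 2 15 * Equiv.swap 15 14) *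
      (Equiv.swap 4 12 * Equiv.swap 12 13) * (Equiv.swap 6 10 * Equiv.swap 10 11) := by
    decide
  have hfw : TypeVIAux.f TypeVIAux.w =
      Equiv.swap (1 : Fin 16) 4 * (Equiv.swap 2 14 * Equiv.swap 14 7 * Equiv.swap 7 15) *
      (Equiv.swap 3 10 * Equiv.swap 10 6 * Equiv.swap 6 11) *
      (Equiv.swap 8 9 * Equiv.swap 9 13 * Equiv.swap 13 12) := by
    decide
  have key : ∀ (a b : Fin 16),
      Equiv.Perm.viaEmbeddingHom (Fin.valEmbedding : Fin 16 ↪ ℕ) (Equiv.swap a b) =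
        Equiv.swap (a : ℕ) (b : ℕ) := fun a b => by
    rw [Equiv.Perm.viaEmbeddingHom_apply, TypeVIAux.viaEmbedding_swap]; rfl
  have hφs : TypeVIAux.φ TypeVIAux.s = σ := by
    show Equiv.Perm.viaEmbeddingHom _ (TypeVIAux.f TypeVIAux.s) = σ
    rw [hfs]
    simp only [map_mul, key]
    rfl
  have hφr : TypeVIAux.φ TypeVIAux.r = ρ := by
    show Equiv.Perm.viaEmbeddingHom _ (TypeVIAux.f TypeVIAux.r) = ρ
    rw [hfr]
    simp only [map_mul, key]
    rfl
  have hφw : TypeVIAux.φ TypeVIAux.w = ω := by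
    show Equiv.Perm.viaEmbeddingHom _ (TypeVIAux.f TypeVIAux.w) = ω
    rw [hfw]
    simp only [map_mul, key]
    rfl
  have hrange : Subgroup.closure ({σ, ρ, ω} : Set (Equiv.Perm ℕ)) = TypeVIAux.φ.range := by
    rw [MonoidHom.range_eq_map, ← TypeVIAux.closure_srw, MonoidHom.map_closure]
    congr 1
    rw [Set.image_insert_eq, Set.image_insert_eq, Set.image_singleton, hφs, hφr, hφw]
  have hcard : Nat.card ↥(Subgroup.closure ({σ, ρ, ω} : Set (Equiv.Perm ℕ))) = 24 := by
    rw [hrange]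
    have : Nat.card ↥TypeVIAux.φ.range = Nat.card (Equiv.Perm (Fin 4)) :=
      Nat.card_congr (Equiv.ofInjective _ TypeVIAux.φ_injective).symm
    rw [this, Nat.card_eq_fintype_card, Fintype.card_perm]
    rfl
  refine ⟨?_, hcard, ?_⟩
  · rw [← hφw, orderOf_injective TypeVIAux.φ TypeVIAux.φ_injective]
    rw [orderOf_eq_iff (by norm_num)]
    constructor
    · decide
    · intro m hm hm'
      interval_cases m <;> decide
  · rw [hrange]
    exact ⟨(MonoidHom.ofInjective TypeVIAux.φ_injective).symm⟩
end

section
/- In the symmetric group on {1,…,15}, let σ := (8 9)(10 11)(12 13)(14 15), ρ := (1 9 8)(2 15 14)(4 12 13)(6 10 11), and ω := (1 4)(2 14 7 15)(3 10 6 11)(8 9 13 12) (unlisted points are fixed). Then the orbits of the subgroup ⟨σ, ρ, ω⟩ on {1,…,15} are exactly {1,4,8,9,12,13}, {2,7,14,15}, {3,6,10,11}, and {5}. -/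
/-! Each generator is a product of transpositions within the four claimed blocks, so `⟨σ, ρ, ω⟩`
preserves the function sending a point to its block, and no orbit leaves a block. Conversely,
explicit words in `σ, ρ, ω` carry `1, 2, 3` to every other point of their blocks. -/

open MulAction

namespace Equiv.Perm

variable {α β : Type*}

def fiberwise (f : α → β) : Subgroup (Perm α) where
  carrier := {g | ∀ x, f (g x) = f x}
  one_mem' _ := rfl
  mul_mem' hg hh x := (hg _).trans (hh x)
  inv_mem' {g} hg x := by simpa using (hg (g⁻¹ x)).symm

theorem swap_mem_fiberwise [DecidableEq α] {f : α → β} {a b : α} (h : f a = f b) :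
    swap a b ∈ fiberwise f := by
  intro x
  rcases eq_or_ne x a with rfl | hxa
  · rw [swap_apply_left, h]
  rcases eq_or_ne x b with rfl | hxb
  · rw [swap_apply_right, h]
  · rw [swap_apply_of_ne_of_ne hxa hxb]

theorem orbit_closure_subset_fiber {f : α → β} {S : Set (Perm α)} (hS : S ⊆ fiberwise f)
    (x : α) : orbit (Subgroup.closure S) x ⊆ f ⁻¹' {f x} := by
  rintro _ ⟨⟨g, hg⟩, rfl⟩
  exact (Subgroup.closure_le _).mpr hS hg x

end Equiv.Perm

theorem MulAction.mem_orbit_of_mem_subgroup {α : Type*} {G : Type*} [Group G] [MulAction G α]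
    {H : Subgroup G} {g : G} (hg : g ∈ H) {x y : α} (h : g • x = y) : y ∈ orbit H x :=
  ⟨⟨g, hg⟩, h⟩

theorem MulAction.orbit_eq_of_mem {G α : Type*} [Group G] [MulAction G α] {x y : α} {B : Set α}
    (hx : orbit G x = B) (hy : y ∈ B) : orbit G y = B :=
  (orbit_eq_iff.mpr (hx ▸ hy)).trans hx

namespace TypeVI

open Equiv Equiv.Perm

def σ : Perm ℕ := swap 8 9 * swap 10 11 * swap 12 13 * swap 14 15

def ρ : Perm ℕ :=
  (swap 1 9 * swap 9 8) * (swap 2 15 * swap 15 14) * (swap 4 12 * swap 12 13) *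
    (swap 6 10 * swap 10 11)

def ω : Perm ℕ :=
  swap 1 4 * (swap 2 14 * swap 14 7 * swap 7 15) * (swap 3 10 * swap 10 6 * swap 6 11) *
    (swap 8 9 * swap 9 13 * swap 13 12)

abbrev G : Subgroup (Perm ℕ) := Subgroup.closure {σ, ρ, ω}

def block (n : ℕ) : ℕ :=
  if n ∈ ({1, 4, 8, 9, 12, 13} : Finset ℕ) then 1
  else if n ∈ ({2, 7, 14, 15} : Finset ℕ) then 2
  else if n ∈ ({3, 6, 10, 11} : Finset ℕ) then 3
  else n

theorem generators_subset_fiberwise : ({σ, ρ, ω} : Set (Perm ℕ)) ⊆ fiberwise block := by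
  simp only [Set.insert_subset_iff, Set.singleton_subset_iff, SetLike.mem_coe, σ, ρ, ω]
  refine ⟨?_, ?_, ?_⟩ <;>
    repeat' first | apply mul_mem | (apply swap_mem_fiberwise; decide)

theorem σ_mem : σ ∈ G := Subgroup.subset_closure (by simp)
theorem ρ_mem : ρ ∈ G := Subgroup.subset_closure (by simp)
theorem ω_mem : ω ∈ G := Subgroup.subset_closure (by simp)

theorem orbit_subset_block (x : ℕ) : orbit G x ⊆ {y | block y = block x} :=
  orbit_closure_subset_fiber generators_subset_fiberwise x

theorem orbit_eq_of_fiber_subset {x : ℕ} {B : Set ℕ} (hB : ∀ y, block y = block x → y ∈ B)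
    (hx : B ⊆ orbit G x) : orbit G x = B :=
  Set.Subset.antisymm (fun y hy ↦ hB y (orbit_subset_block x hy)) hx

theorem orbit_one : orbit G 1 = ({1, 4, 8, 9, 12, 13} : Set ℕ) := by
  refine orbit_eq_of_fiber_subset (fun y hy ↦ ?_) ?_
  · simp only [block, Finset.mem_insert, Finset.mem_singleton, Set.mem_insert_iff,
      Set.mem_singleton_iff] at hy ⊢
    split_ifs at hy <;> omega
  · simp only [Set.insert_subset_iff, Set.singleton_subset_iff]
    exact ⟨mem_orbit_self 1, mem_orbit_of_mem_subgroup ω_mem (by decide),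
      mem_orbit_of_mem_subgroup (mul_mem ρ_mem ρ_mem) (by decide),
      mem_orbit_of_mem_subgroup ρ_mem (by decide),
      mem_orbit_of_mem_subgroup (mul_mem (mul_mem σ_mem ω_mem) ρ_mem) (by decide),
      mem_orbit_of_mem_subgroup (mul_mem ω_mem ρ_mem) (by decide)⟩

theorem orbit_two : orbit G 2 = ({2, 7, 14, 15} : Set ℕ) := by
  refine orbit_eq_of_fiber_subset (fun y hy ↦ ?_) ?_
  · simp only [block, Finset.mem_insert, Finset.mem_singleton, Set.mem_insert_iff,
      Set.mem_singleton_iff] at hy ⊢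
    split_ifs at hy <;> omega
  · simp only [Set.insert_subset_iff, Set.singleton_subset_iff]
    exact ⟨mem_orbit_self 2, mem_orbit_of_mem_subgroup (pow_mem ω_mem 2) (by decide),
      mem_orbit_of_mem_subgroup ω_mem (by decide),
      mem_orbit_of_mem_subgroup (pow_mem ω_mem 3) (by decide)⟩

theorem orbit_three : orbit G 3 = ({3, 6, 10, 11} : Set ℕ) := by
  refine orbit_eq_of_fiber_subset (fun y hy ↦ ?_) ?_
  · simp only [block, Finset.mem_insert, Finset.mem_singleton, Set.mem_insert_iff,
      Set.mem_singleton_iff] at hy ⊢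
    split_ifs at hy <;> omega
  · simp only [Set.insert_subset_iff, Set.singleton_subset_iff]
    exact ⟨mem_orbit_self 3, mem_orbit_of_mem_subgroup (pow_mem ω_mem 2) (by decide),
      mem_orbit_of_mem_subgroup ω_mem (by decide),
      mem_orbit_of_mem_subgroup (pow_mem ω_mem 3) (by decide)⟩

theorem orbit_five : orbit G 5 = ({5} : Set ℕ) := by
  refine orbit_eq_of_fiber_subset (fun y hy ↦ ?_) ?_
  · simp only [block, Finset.mem_insert, Finset.mem_singleton, Set.mem_singleton_iff] at hy ⊢
    split_ifs at hy <;> omega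
  · exact Set.singleton_subset_iff.mpr (mem_orbit_self 5)

end TypeVI

/-- In the symmetric group on `{1,…,15}` (realized inside `Equiv.Perm ℕ`, all other
points being fixed), with `σ = (8 9)(10 11)(12 13)(14 15)`,
`ρ = (1 9 8)(2 15 14)(4 12 13)(6 10 11)` and
`ω = (1 4)(2 14 7 15)(3 10 6 11)(8 9 13 12)`, the orbits of the subgroup `⟨σ, ρ, ω⟩`
on `{1,…,15}` are exactly `{1,4,8,9,12,13}, {2,7,14,15}, {3,6,10,11}, {5}`. -/
theorem typeVI_reduced_automorphism_orbits :
    let σ : Equiv.Perm ℕ :=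
      Equiv.swap 8 9 * Equiv.swap 10 11 * Equiv.swap 12 13 * Equiv.swap 14 15
    let ρ : Equiv.Perm ℕ :=
      (Equiv.swap 1 9 * Equiv.swap 9 8) * (Equiv.swap 2 15 * Equiv.swap 15 14) *
      (Equiv.swap 4 12 * Equiv.swap 12 13) * (Equiv.swap 6 10 * Equiv.swap 10 11)
    let ω : Equiv.Perm ℕ :=
      Equiv.swap 1 4 * (Equiv.swap 2 14 * Equiv.swap 14 7 * Equiv.swap 7 15) *
      (Equiv.swap 3 10 * Equiv.swap 10 6 * Equiv.swap 6 11) *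
      (Equiv.swap 8 9 * Equiv.swap 9 13 * Equiv.swap 13 12)
    {S : Set ℕ | ∃ x ∈ Set.Icc 1 15,
        S = MulAction.orbit (Subgroup.closure ({σ, ρ, ω} : Set (Equiv.Perm ℕ))) x} =
      {{1, 4, 8, 9, 12, 13}, {2, 7, 14, 15}, {3, 6, 10, 11}, {5}} := by
  show {S | ∃ x ∈ Set.Icc 1 15, S = orbit TypeVI.G x} = _
  ext S
  constructor
  · rintro ⟨x, ⟨hx₁, hx₁₅⟩, rfl⟩
    have hx : x ∈ ({1, 4, 8, 9, 12, 13} : Set ℕ) ∨ x ∈ ({2, 7, 14, 15} : Set ℕ) ∨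
        x ∈ ({3, 6, 10, 11} : Set ℕ) ∨ x ∈ ({5} : Set ℕ) := by
      interval_cases x <;> simp
    rcases hx with hx | hx | hx | hx
    · exact .inl (orbit_eq_of_mem TypeVI.orbit_one hx)
    · exact .inr (.inl (orbit_eq_of_mem TypeVI.orbit_two hx))
    · exact .inr (.inr (.inl (orbit_eq_of_mem TypeVI.orbit_three hx)))
    · exact .inr (.inr (.inr (orbit_eq_of_mem TypeVI.orbit_five hx)))
  · rintro (rfl | rfl | rfl | rfl)
    exacts [⟨1, by norm_num, TypeVI.orbit_one.symm⟩, ⟨2, by norm_num, TypeVI.orbit_two.symm⟩,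
      ⟨3, by norm_num, TypeVI.orbit_three.symm⟩, ⟨5, by norm_num, TypeVI.orbit_five.symm⟩]
end

section
/- Let X be a finite set with exactly 6 elements and let g : X ≃ X be a fixed-point-free involution (g ∘ g = id, g ≠ id, and g(x) ≠ x for all x ∈ X). Consider the induced action of g on the set of perfect matchings of X (partitions of X into three two-element subsets). Then exactly 7 of the 15 perfect matchings of X are invariant under g, and the remaining 8 form 4 orbits of size 2. -/
/-!
A fixed-point-free involution of a six-element set has cycle type `2 + 2 + 2`, so it is conjugate
to `(0 1)(2 3)(4 5)` on `Fin 6`. Transporting matchings along the conjugating bijection preserves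
both perfectness and invariance, so the counts `15` and `7` may be computed for that single
involution. The remaining `8` non-invariant matchings are swapped in pairs `{M, g M}`, giving `4`
orbits.
-/

/-- `M` is a perfect matching of `X`: a partition of `X` into three two-element
subsets. -/
def IsPerfectMatching {X : Type*} [DecidableEq X] (M : Finset (Finset X)) : Prop :=
  M.card = 3 ∧ (∀ p ∈ M, p.card = 2) ∧ ∀ x : X, ∃! p, p ∈ M ∧ x ∈ p

/-- The action of a permutation `g` of `X` on a perfect matching. -/
def matchingMap {X : Type*} [DecidableEq X] (g : Equiv.Perm X)
    (M : Finset (Finset X)) : Finset (Finset X) :=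
  M.image fun p => p.image g

open Finset Function Equiv

section Matchings

variable {X Y : Type*} [DecidableEq X] [DecidableEq Y]

theorem isPerfectMatching_iff_card_filter (M : Finset (Finset X)) :
    IsPerfectMatching M ↔
      #M = 3 ∧ (∀ p ∈ M, #p = 2) ∧ ∀ x, #{p ∈ M | x ∈ p} = 1 := by
  simp only [IsPerfectMatching, card_eq_one_iff_existsUnique, mem_filter]

instance [Fintype X] : DecidablePred (IsPerfectMatching (X := X)) := fun M =>
  decidable_of_iff _ (isPerfectMatching_iff_card_filter M).symm

theorem isPerfectMatching_finsetCongr (f : X ≃ Y) (M : Finset (Finset X)) :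
    IsPerfectMatching (f.finsetCongr.finsetCongr M) ↔ IsPerfectMatching M := by
  rw [isPerfectMatching_iff_card_filter, isPerfectMatching_iff_card_filter, finsetCongr_apply,
    card_map, forall_mem_map, ← f.forall_congr_right]
  simp [filter_map, Function.comp_def]

theorem matchingMap_eq_finsetCongr (g : Perm X) (M : Finset (Finset X)) :
    matchingMap g M = g.finsetCongr.finsetCongr M := by
  simp only [matchingMap, finsetCongr_apply, map_eq_image]
  congr 1
  funext p
  simp [map_eq_image]

theorem isPerfectMatching_matchingMap (g : Perm X) (M : Finset (Finset X)) :
    IsPerfectMatching (matchingMap g M) ↔ IsPerfectMatching M := by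
  rw [matchingMap_eq_finsetCongr, isPerfectMatching_finsetCongr]

theorem matchingMap_one (M : Finset (Finset X)) : matchingMap 1 M = M := by
  simp [matchingMap]

theorem matchingMap_mul (g h : Perm X) (M : Finset (Finset X)) :
    matchingMap (g * h) M = matchingMap g (matchingMap h M) := by
  simp [matchingMap, image_image, Function.comp_def]

theorem matchingMap_permCongr (f : X ≃ Y) (g : Perm X) (M : Finset (Finset X)) :
    matchingMap (f.permCongr g) (f.finsetCongr.finsetCongr M) =
      f.finsetCongr.finsetCongr (matchingMap g M) := by
  simp [matchingMap, map_eq_image, image_image, Function.comp_def]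

theorem natCard_isPerfectMatching_congr (f : X ≃ Y) :
    Nat.card {M : Finset (Finset X) // IsPerfectMatching M} =
      Nat.card {M : Finset (Finset Y) // IsPerfectMatching M} :=
  Nat.card_congr <| f.finsetCongr.finsetCongr.subtypeEquiv fun M =>
    (isPerfectMatching_finsetCongr f M).symm

theorem natCard_isPerfectMatching_fixed_congr (f : X ≃ Y) (g : Perm X) :
    Nat.card {M : Finset (Finset X) // IsPerfectMatching M ∧ matchingMap g M = M} =
      Nat.card {M : Finset (Finset Y) //
        IsPerfectMatching M ∧ matchingMap (f.permCongr g) M = M} :=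
  Nat.card_congr <| f.finsetCongr.finsetCongr.subtypeEquiv fun M => by
    rw [isPerfectMatching_finsetCongr, matchingMap_permCongr, EquivLike.apply_eq_iff_eq]

theorem mem_powersetCard_powersetCard_of_isPerfectMatching [Fintype X] {M : Finset (Finset X)}
    (hM : IsPerfectMatching M) : M ∈ (univ.powersetCard 2).powersetCard 3 := by
  obtain ⟨h3, h2, -⟩ := hM
  exact mem_powersetCard.2 ⟨fun p hp => mem_powersetCard.2 ⟨subset_univ p, h2 p hp⟩, h3⟩

theorem natCard_eq_card_filter_powersetCard [Fintype X] {q : Finset (Finset X) → Prop}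
    [DecidablePred q] (hq : ∀ M, q M → IsPerfectMatching M) :
    Nat.card {M // q M} = #{M ∈ (univ.powersetCard 2).powersetCard 3 | q M} := by
  rw [Nat.card_eq_fintype_card, Fintype.card_subtype]
  congr 1
  ext M
  simpa using fun hM => mem_powersetCard_powersetCard_of_isPerfectMatching (hq M hM)

end Matchings

theorem Equiv.Perm.cycleType_eq_replicate_of_sq_eq_one {α : Type*} [Fintype α] [DecidableEq α]
    {σ : Perm α} (hσ : σ ^ 2 = 1) (hfree : ∀ x, σ x ≠ x) :
    σ.cycleType = Multiset.replicate (Fintype.card α / 2) 2 := by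
  have hsum : σ.cycleType.sum = Fintype.card α := by
    rw [Perm.sum_cycleType, eq_univ_of_forall fun x => Perm.mem_support.2 (hfree x), card_univ]
  rw [Perm.cycleType_of_pow_prime_eq_one hσ] at hsum ⊢
  rw [Multiset.sum_replicate, smul_eq_mul] at hsum
  rw [← hsum, Nat.mul_div_cancel _ two_pos]

theorem Equiv.exists_permCongr_eq_of_sq_eq_one {X Y : Type*} [Fintype X] [DecidableEq X]
    [Fintype Y] [DecidableEq Y] (hXY : Fintype.card X = Fintype.card Y) {g : Perm X} {c : Perm Y}
    (hg : g ^ 2 = 1) (hgfree : ∀ x, g x ≠ x) (hc : c ^ 2 = 1) (hcfree : ∀ y, c y ≠ y) :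
    ∃ f : X ≃ Y, f.permCongr g = c := by
  let e := Fintype.equivOfCardEq hXY
  have he : (e.permCongr g) ^ 2 = 1 := by
    rw [← permCongrHom_coe, ← map_pow, hg, map_one]
  have hefree : ∀ y, e.permCongr g y ≠ y := fun y h => hgfree _ (e.eq_symm_apply.2 h)
  have hconj : IsConj (e.permCongr g) c := by
    rw [Perm.isConj_iff_cycleType_eq, Perm.cycleType_eq_replicate_of_sq_eq_one he hefree,
      Perm.cycleType_eq_replicate_of_sq_eq_one hc hcfree]
  obtain ⟨h, rfl⟩ := isConj_iff.mp hconj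
  exact ⟨e.trans h, by ext; simp⟩

theorem Nat.card_subtype_and_add_card_subtype_and_not {α : Type*} [Finite α] (p q : α → Prop) :
    Nat.card {a // p a ∧ q a} + Nat.card {a // p a ∧ ¬q a} = Nat.card {a // p a} := by
  classical
  have := Fintype.ofFinite α
  simp only [Nat.card_eq_fintype_card, Fintype.card_subtype, ← filter_filter]
  exact card_filter_add_card_filter_not _

theorem two_mul_ncard_setOf_pair {α : Type*} [Finite α] {φ : α → α} (hφ : Involutive φ)
    {p : α → Prop} (hp : ∀ a, p a → p (φ a)) :
    2 * {S : Set α | ∃ a, p a ∧ φ a ≠ a ∧ S = {a, φ a}}.ncard =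
      Nat.card {a // p a ∧ φ a ≠ a} := by
  classical
  have := Fintype.ofFinite α
  let T : Finset α := {a | p a ∧ φ a ≠ a}
  let π : α → Set α := fun a => {a, φ a}
  have hpairs : {S : Set α | ∃ a, p a ∧ φ a ≠ a ∧ S = {a, φ a}} = ↑(T.image π) := by
    ext S
    simp [T, π, eq_comm, and_assoc]
  have hfiber : ∀ a ∈ T, {b ∈ T | π b = π a} = {a, φ a} := by
    intro a ha
    obtain ⟨hpa, hφa⟩ := (mem_filter.1 ha).2
    ext b
    constructor
    · intro hb
      have : b ∈ π a := (mem_filter.1 hb).2 ▸ Set.mem_insert b _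
      simpa [π] using this
    · simp only [mem_insert, mem_singleton]
      rintro (rfl | rfl)
      · exact mem_filter.2 ⟨ha, rfl⟩
      · refine mem_filter.2 ⟨mem_filter.2 ⟨mem_univ _, hp a hpa, ?_⟩, ?_⟩
        · rw [hφ a]
          exact hφa.symm
        · simp only [π, hφ a, Set.pair_comm]
  rw [hpairs, Set.ncard_coe_finset, Nat.card_eq_fintype_card, Fintype.card_subtype,
    card_eq_sum_card_image π T, sum_const_nat (m := 2), mul_comm]
  intro S hS
  obtain ⟨a, ha, rfl⟩ := mem_image.1 hS
  rw [hfiber a ha, card_pair (mem_filter.1 ha).2.2.symm]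

def finSixInvolution : Perm (Fin 6) := swap 0 1 * swap 2 3 * swap 4 5

theorem finSixInvolution_sq : finSixInvolution ^ 2 = 1 := by decide

theorem finSixInvolution_apply_ne (x : Fin 6) : finSixInvolution x ≠ x := by revert x; decide

theorem natCard_isPerfectMatching_fin_six :
    Nat.card {M : Finset (Finset (Fin 6)) // IsPerfectMatching M} = 15 := by
  rw [natCard_eq_card_filter_powersetCard fun _ => id]
  decide +kernel

theorem natCard_isPerfectMatching_fixed_finSixInvolution :
    Nat.card {M // IsPerfectMatching M ∧ matchingMap finSixInvolution M = M} = 7 := by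
  rw [natCard_eq_card_filter_powersetCard fun _ => And.left]
  decide +kernel

theorem fixed_point_free_involution_on_matchings_general
    {X : Type*} [Fintype X] [DecidableEq X] (hX : Fintype.card X = 6)
    (g : Equiv.Perm X) (hg2 : g * g = 1) (hgfree : ∀ x : X, g x ≠ x) :
    Nat.card {M : Finset (Finset X) // IsPerfectMatching M} = 15 ∧
    Nat.card {M : Finset (Finset X) //
      IsPerfectMatching M ∧ matchingMap g M = M} = 7 ∧
    Nat.card {M : Finset (Finset X) //
      IsPerfectMatching M ∧ matchingMap g M ≠ M} = 8 ∧
    Set.ncard {S : Set (Finset (Finset X)) | ∃ M,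
      IsPerfectMatching M ∧ matchingMap g M ≠ M ∧ S = {M, matchingMap g M}} = 4 := by
  obtain ⟨f, hf⟩ := exists_permCongr_eq_of_sq_eq_one (hX.trans (Fintype.card_fin 6).symm)
    (sq g ▸ hg2) hgfree finSixInvolution_sq finSixInvolution_apply_ne
  have h15 : Nat.card {M : Finset (Finset X) // IsPerfectMatching M} = 15 := by
    rw [natCard_isPerfectMatching_congr f, natCard_isPerfectMatching_fin_six]
  have h7 :
      Nat.card {M : Finset (Finset X) // IsPerfectMatching M ∧ matchingMap g M = M} = 7 := by
    rw [natCard_isPerfectMatching_fixed_congr f, hf,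
      natCard_isPerfectMatching_fixed_finSixInvolution]
  have hsplit : Nat.card {M : Finset (Finset X) // IsPerfectMatching M ∧ matchingMap g M = M} +
      Nat.card {M : Finset (Finset X) // IsPerfectMatching M ∧ matchingMap g M ≠ M} =
      Nat.card {M : Finset (Finset X) // IsPerfectMatching M} :=
    Nat.card_subtype_and_add_card_subtype_and_not _ _
  have hpairs := two_mul_ncard_setOf_pair (φ := matchingMap g)
    (fun M => by rw [← matchingMap_mul, hg2, matchingMap_one])
    fun M => (isPerfectMatching_matchingMap g M).2
  refine ⟨h15, h7, by omega, by omega⟩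

/-- If `g` is a fixed-point-free involution of a 6-element set `X`, then exactly 7 of
the 15 perfect matchings of `X` are invariant under `g`, and the remaining 8 form
4 orbits of size 2. -/
theorem fixed_point_free_involution_on_matchings
    {X : Type*} [Fintype X] [DecidableEq X] (hX : Fintype.card X = 6)
    (g : Equiv.Perm X) (hg2 : g * g = 1) (hg1 : g ≠ 1) (hgfree : ∀ x : X, g x ≠ x) :
    Nat.card {M : Finset (Finset X) // IsPerfectMatching M} = 15 ∧
    Nat.card {M : Finset (Finset X) //
      IsPerfectMatching M ∧ matchingMap g M = M} = 7 ∧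
    Nat.card {M : Finset (Finset X) //
      IsPerfectMatching M ∧ matchingMap g M ≠ M} = 8 ∧
    Set.ncard {S : Set (Finset (Finset X)) | ∃ M,
      IsPerfectMatching M ∧ matchingMap g M ≠ M ∧ S = {M, matchingMap g M}} = 4 :=
  fixed_point_free_involution_on_matchings_general hX g hg2 hgfree
end
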